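/- arXiv:1405.2478 — 4 statements merged into one kernel-verified Lean document; each statement's English description precedes it below -/
import Mathlib

section
/- Let d ≥ 1, A > 0 and Λ ≥ 1. Then there exists a constant C > 0, depending only on d, A and Λ, with the following property. Let ρ : ℝ^d \ {0} → ℝ be homogeneous of degree zero (ρ(λx) = ρ(x) for all λ > 0 and x ≠ 0), bounded by A on the unit sphere, and Lipschitz with constant A on the unit sphere, and define K(x) = ρ(x)/‖x‖^d for x ≠ 0. Let Φ : ℝ^d → ℝ^d satisfy Λ^{-1}‖x − y‖ ≤ ‖Φ(x) − Φ(y)‖ ≤ Λ‖x − y‖ for all x, y, and suppose the map x ↦ Φ(x) − x is Lipschitz with constant M. Then for all x ≠ y, |K(Φ(x) − Φ(y)) − K(x − y)| ≤ C·M/‖x − y‖^d. -/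
lemma aux_pow_sub_pow (d : ℕ) (a b c : ℝ) (ha : 0 ≤ a) (hb : 0 ≤ b)
    (hac : a ≤ c) (hbc : b ≤ c) :
    |a ^ d - b ^ d| ≤ d * c ^ (d - 1) * |a - b| := by
  have hc : 0 ≤ c := le_trans ha hac
  rw [← geom_sum₂_mul a b d, abs_mul]
  have hsum : |∑ i ∈ Finset.range d, a ^ i * b ^ (d - 1 - i)| ≤ d * c ^ (d - 1) := by
    calc |∑ i ∈ Finset.range d, a ^ i * b ^ (d - 1 - i)|
        ≤ ∑ i ∈ Finset.range d, |a ^ i * b ^ (d - 1 - i)| :=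
          Finset.abs_sum_le_sum_abs _ _
      _ ≤ ∑ _i ∈ Finset.range d, c ^ (d - 1) := by
          apply Finset.sum_le_sum
          intro i hi
          rw [abs_mul, abs_pow, abs_pow, abs_of_nonneg ha, abs_of_nonneg hb]
          have h1 : a ^ i * b ^ (d - 1 - i) ≤ c ^ i * c ^ (d - 1 - i) := by
            apply mul_le_mul (pow_le_pow_left₀ ha hac i) (pow_le_pow_left₀ hb hbc _)
              (by positivity) (by positivity)
          refine h1.trans_eq ?_
          rw [← pow_add]
          congr 1
          have := Finset.mem_range.mp hi
          omega
      _ = d * c ^ (d - 1) := by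
          rw [Finset.sum_const, Finset.card_range, nsmul_eq_mul]
  exact mul_le_mul_of_nonneg_right hsum (abs_nonneg _)

theorem stmt_3 (d : ℕ) (hd : 1 ≤ d) (A : ℝ) (hA : 0 < A) (Λ : ℝ) (hΛ : 1 ≤ Λ) :
    ∃ C : ℝ, 0 < C ∧
      ∀ ρ : EuclideanSpace ℝ (Fin d) → ℝ,
        (∀ l : ℝ, 0 < l → ∀ x : EuclideanSpace ℝ (Fin d), x ≠ 0 → ρ (l • x) = ρ x) →
        (∀ x : EuclideanSpace ℝ (Fin d), ‖x‖ = 1 → |ρ x| ≤ A) →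
        (∀ x y : EuclideanSpace ℝ (Fin d), ‖x‖ = 1 → ‖y‖ = 1 → |ρ x - ρ y| ≤ A * ‖x - y‖) →
        ∀ K : EuclideanSpace ℝ (Fin d) → ℝ,
          (∀ x : EuclideanSpace ℝ (Fin d), x ≠ 0 → K x = ρ x / ‖x‖ ^ d) →
          ∀ (Φ : EuclideanSpace ℝ (Fin d) → EuclideanSpace ℝ (Fin d)) (M : ℝ), 0 ≤ M →
            (∀ x y, Λ⁻¹ * ‖x - y‖ ≤ ‖Φ x - Φ y‖ ∧ ‖Φ x - Φ y‖ ≤ Λ * ‖x - y‖) →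
            (∀ x y, ‖(Φ x - x) - (Φ y - y)‖ ≤ M * ‖x - y‖) →
            ∀ x y, x ≠ y →
              |K (Φ x - Φ y) - K (x - y)| ≤ C * M / ‖x - y‖ ^ d := by
  have hΛ0 : (0:ℝ) < Λ := lt_of_lt_of_le one_pos hΛ
  refine ⟨(d + 2) * Λ ^ (2 * d) * A, by positivity, ?_⟩
  intro ρ hhom hbd hlip K hK Φ M hM hbilip hdev x y hxy
  set u := x - y with hu
  set v := Φ x - Φ y with hv
  have hune : u ≠ 0 := sub_ne_zero.mpr hxy
  have ha : (0:ℝ) < ‖u‖ := norm_pos_iff.mpr hune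
  have hb_lb : Λ⁻¹ * ‖u‖ ≤ ‖v‖ := (hbilip x y).1
  have hb_ub : ‖v‖ ≤ Λ * ‖u‖ := (hbilip x y).2
  have hb : (0:ℝ) < ‖v‖ := lt_of_lt_of_le (by positivity) hb_lb
  have hvne : v ≠ 0 := norm_pos_iff.mp hb
  have hvu : ‖v - u‖ ≤ M * ‖u‖ := by
    have h := hdev x y
    have he : (Φ x - x) - (Φ y - y) = v - u := by rw [hv, hu]; abel
    rwa [he] at h
  have haΛb : ‖u‖ ≤ Λ * ‖v‖ := (inv_mul_le_iff₀ hΛ0).mp hb_lb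
  -- unit vectors
  set uh := (‖u‖⁻¹ : ℝ) • u with huh
  set vh := (‖v‖⁻¹ : ℝ) • v with hvh
  have huh1 : ‖uh‖ = 1 := norm_smul_inv_norm (𝕜 := ℝ) hune
  have hvh1 : ‖vh‖ = 1 := norm_smul_inv_norm (𝕜 := ℝ) hvne
  have hρu : ρ uh = ρ u := hhom _ (by positivity) _ hune
  have hρv : ρ vh = ρ v := hhom _ (by positivity) _ hvne
  have hpa : (0:ℝ) < ‖u‖ ^ d := by positivity
  have hpb : (0:ℝ) < ‖v‖ ^ d := by positivity
  -- h1 : |ρ vh - ρ uh| ≤ 2*A*M*Λ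
  have hnormdiff : ‖vh - uh‖ ≤ 2 * (M * Λ) := by
    have hid : vh - uh = (‖v‖⁻¹ : ℝ) • (v - u) + ((‖v‖⁻¹ : ℝ) - ‖u‖⁻¹) • u := by
      rw [hvh, huh, smul_sub, sub_smul]; module
    have h7 : |‖u‖ - ‖v‖| ≤ M * ‖u‖ := by
      refine le_trans (abs_norm_sub_norm_le u v) ?_
      rwa [norm_sub_rev]
    have hA2 : ‖((‖v‖⁻¹ : ℝ) - ‖u‖⁻¹) • u‖ ≤ M * Λ := by
      rw [norm_smul, Real.norm_eq_abs]
      have he1 : |(‖v‖⁻¹ : ℝ) - ‖u‖⁻¹| * ‖u‖ = |((‖v‖⁻¹ : ℝ) - ‖u‖⁻¹) * ‖u‖| := by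
        rw [abs_mul, abs_of_pos ha]
      rw [he1]
      have he2 : ((‖v‖⁻¹ : ℝ) - ‖u‖⁻¹) * ‖u‖ = (‖u‖ - ‖v‖) / ‖v‖ := by
        field_simp
      rw [he2, abs_div, abs_of_pos hb]
      rw [div_le_iff₀ hb]
      calc |‖u‖ - ‖v‖| ≤ M * ‖u‖ := h7
        _ ≤ M * (Λ * ‖v‖) := by
            exact mul_le_mul_of_nonneg_left haΛb hM
        _ = M * Λ * ‖v‖ := by ring
    have hA1 : ‖(‖v‖⁻¹ : ℝ) • (v - u)‖ ≤ M * Λ := by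
      rw [norm_smul, Real.norm_eq_abs, abs_of_pos (by positivity : (0:ℝ) < ‖v‖⁻¹)]
      rw [inv_mul_le_iff₀ hb]
      calc ‖v - u‖ ≤ M * ‖u‖ := hvu
        _ ≤ M * (Λ * ‖v‖) := mul_le_mul_of_nonneg_left haΛb hM
        _ = ‖v‖ * (M * Λ) := by ring
    calc ‖vh - uh‖ ≤ ‖(‖v‖⁻¹ : ℝ) • (v - u)‖ + ‖((‖v‖⁻¹ : ℝ) - ‖u‖⁻¹) • u‖ := by
          rw [hid]; exact norm_add_le _ _
      _ ≤ M * Λ + M * Λ := add_le_add hA1 hA2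
      _ = 2 * (M * Λ) := by ring
  have h1 : |ρ vh - ρ uh| ≤ A * (2 * (M * Λ)) := by
    refine le_trans (hlip vh uh hvh1 huh1) ?_
    exact mul_le_mul_of_nonneg_left hnormdiff hA.le
  have h2 : |ρ uh| ≤ A := hbd uh huh1
  -- h3 : |‖u‖^d - ‖v‖^d| ≤ d * Λ^(d-1) * M * ‖u‖^d
  have h3 : |‖u‖ ^ d - ‖v‖ ^ d| ≤ d * Λ ^ (d - 1) * M * ‖u‖ ^ d := by
    have haux := aux_pow_sub_pow d ‖u‖ ‖v‖ (Λ * ‖u‖) ha.le hb.le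
      (le_mul_of_one_le_left ha.le hΛ) hb_ub
    refine haux.trans ?_
    have h7 : |‖u‖ - ‖v‖| ≤ M * ‖u‖ := by
      refine le_trans (abs_norm_sub_norm_le u v) ?_
      rwa [norm_sub_rev]
    calc (d : ℝ) * (Λ * ‖u‖) ^ (d - 1) * |‖u‖ - ‖v‖|
        ≤ (d : ℝ) * (Λ * ‖u‖) ^ (d - 1) * (M * ‖u‖) := by
          exact mul_le_mul_of_nonneg_left h7 (by positivity)
      _ = d * Λ ^ (d - 1) * M * (‖u‖ ^ (d - 1) * ‖u‖) := by
          rw [mul_pow]; ring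
      _ = d * Λ ^ (d - 1) * M * ‖u‖ ^ d := by
          rw [← pow_succ]
          congr 2
          omega
  -- h4 : ‖u‖^d ≤ Λ^d * ‖v‖^d
  have h4 : ‖u‖ ^ d ≤ Λ ^ d * ‖v‖ ^ d := by
    calc ‖u‖ ^ d ≤ (Λ * ‖v‖) ^ d := pow_le_pow_left₀ ha.le haΛb d
      _ = Λ ^ d * ‖v‖ ^ d := mul_pow _ _ _
  -- rewrite K
  rw [hK v hvne, hK u hune, ← hρv, ← hρu]
  -- main estimate
  have key : ρ vh / ‖v‖ ^ d - ρ uh / ‖u‖ ^ d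
      = (ρ vh - ρ uh) / ‖v‖ ^ d + ρ uh * (‖u‖ ^ d - ‖v‖ ^ d) / (‖u‖ ^ d * ‖v‖ ^ d) := by
    field_simp
    ring
  have step1 : |ρ vh / ‖v‖ ^ d - ρ uh / ‖u‖ ^ d|
      ≤ A * M * (2 * Λ + d * Λ ^ (d - 1)) / ‖v‖ ^ d := by
    rw [key]
    calc |(ρ vh - ρ uh) / ‖v‖ ^ d + ρ uh * (‖u‖ ^ d - ‖v‖ ^ d) / (‖u‖ ^ d * ‖v‖ ^ d)|
        ≤ |(ρ vh - ρ uh) / ‖v‖ ^ d| + |ρ uh * (‖u‖ ^ d - ‖v‖ ^ d) / (‖u‖ ^ d * ‖v‖ ^ d)| :=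
          abs_add_le _ _
      _ = |ρ vh - ρ uh| / ‖v‖ ^ d + |ρ uh| * |‖u‖ ^ d - ‖v‖ ^ d| / (‖u‖ ^ d * ‖v‖ ^ d) := by
          rw [abs_div, abs_div, abs_mul, abs_of_pos hpb, abs_of_pos (by positivity :
            (0:ℝ) < ‖u‖ ^ d * ‖v‖ ^ d)]
      _ ≤ (A * (2 * (M * Λ))) / ‖v‖ ^ d
          + A * (d * Λ ^ (d - 1) * M * ‖u‖ ^ d) / (‖u‖ ^ d * ‖v‖ ^ d) := by
          gcongr
      _ = A * M * (2 * Λ + d * Λ ^ (d - 1)) / ‖v‖ ^ d := by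
          field_simp
  refine step1.trans ?_
  -- final comparison
  rw [div_le_div_iff₀ hpb hpa]
  have h5 : Λ * Λ ^ d ≤ Λ ^ (2 * d) := by
    rw [← pow_succ']
    exact pow_le_pow_right₀ hΛ (by omega)
  have h6 : Λ ^ (d - 1) * Λ ^ d ≤ Λ ^ (2 * d) := by
    rw [← pow_add]
    exact pow_le_pow_right₀ hΛ (by omega)
  have hΛd : (0:ℝ) < Λ ^ d := by positivity
  have hΛd1 : (0:ℝ) < Λ ^ (d - 1) := by positivity
  calc A * M * (2 * Λ + ↑d * Λ ^ (d - 1)) * ‖u‖ ^ d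
      ≤ A * M * (2 * Λ + ↑d * Λ ^ (d - 1)) * (Λ ^ d * ‖v‖ ^ d) := by
        apply mul_le_mul_of_nonneg_left h4
        positivity
    _ = A * M * (2 * (Λ * Λ ^ d) + ↑d * (Λ ^ (d - 1) * Λ ^ d)) * ‖v‖ ^ d := by ring
    _ ≤ A * M * (2 * Λ ^ (2 * d) + ↑d * Λ ^ (2 * d)) * ‖v‖ ^ d := by
        apply mul_le_mul_of_nonneg_right _ hpb.le
        apply mul_le_mul_of_nonneg_left _ (by positivity)
        apply add_le_add (mul_le_mul_of_nonneg_left h5 (by norm_num))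
          (mul_le_mul_of_nonneg_left h6 (by positivity))
    _ = (↑d + 2) * Λ ^ (2 * d) * A * M * ‖v‖ ^ d := by ring
end

section
/- There exists a constant c > 0 such that for every natural number N ≥ 1, ∫_{[−2^N, 2^N]²} (sin ξ₁)²·(sin ξ₂)²/(ξ₁² + ξ₂²) dξ₁ dξ₂ ≥ c·N. -/
/-!
On a dyadic square `[c, 2c)²` of the first quadrant one has `ξ₁² + ξ₂² ≤ 8c²`, while
`∫_c^{2c} sin² ≥ c/2`, so the integral over that square is at least `(c/2)² / (8c²) = 1/32`,
independently of the scale `c`. The square `[-2ᴺ, 2ᴺ]²` contains the `N` disjoint squares with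
`c = π 2ᵏ / 4`, `k < N`, and the integrand is nonnegative.
-/

open MeasureTheory Real Set

noncomputable def sinSqKernel (p : ℝ × ℝ) : ℝ :=
  sin p.1 ^ 2 * sin p.2 ^ 2 / (p.1 ^ 2 + p.2 ^ 2)

lemma sinSqKernel_nonneg (p : ℝ × ℝ) : 0 ≤ sinSqKernel p := by
  unfold sinSqKernel
  positivity

lemma sinSqKernel_le_one (p : ℝ × ℝ) : sinSqKernel p ≤ 1 := by
  refine div_le_one_of_le₀ ?_ (by positivity)
  calc sin p.1 ^ 2 * sin p.2 ^ 2 ≤ p.1 ^ 2 * 1 :=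
        mul_le_mul sin_sq_le_sq (sin_sq_le_one _) (by positivity) (by positivity)
    _ ≤ p.1 ^ 2 + p.2 ^ 2 := by nlinarith [sq_nonneg p.2]

lemma integrableOn_sinSqKernel {s : Set (ℝ × ℝ)} (hs : volume s ≠ ⊤) :
    IntegrableOn sinSqKernel s :=
  Measure.integrableOn_of_bounded (M := 1) hs
    (by unfold sinSqKernel; fun_prop : Measurable sinSqKernel).aestronglyMeasurable
    (ae_of_all _ fun p => by
      rw [norm_of_nonneg (sinSqKernel_nonneg p)]; exact sinSqKernel_le_one p)

lemma half_sub_le_integral_sin_sq {a b : ℝ} (hab : a ≤ b)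
    (h : sin b * cos b ≤ sin a * cos a) :
    (b - a) / 2 ≤ ∫ x in Ico a b, sin x ^ 2 := by
  rw [setIntegral_congr_set Ico_ae_eq_Ioc, ← intervalIntegral.integral_of_le hab,
    integral_sin_sq]
  linarith

lemma integral_sin_sq_sq_div_le_integral_sinSqKernel {a b : ℝ} (ha : 0 < a) :
    (∫ x in Ico a b, sin x ^ 2) ^ 2 / (2 * b ^ 2) ≤
      ∫ p in Ico a b ×ˢ Ico a b, sinSqKernel p := by
  have hpointwise : ∀ p ∈ Ico a b ×ˢ Ico a b,
      sin p.1 ^ 2 * (sin p.2 ^ 2 / (2 * b ^ 2)) ≤ sinSqKernel p := by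
    rintro p ⟨⟨hx₁, hx₂⟩, ⟨hy₁, hy₂⟩⟩
    have hpos : 0 < p.1 ^ 2 + p.2 ^ 2 := by nlinarith
    have hle : p.1 ^ 2 + p.2 ^ 2 ≤ 2 * b ^ 2 := by nlinarith
    rw [mul_div_assoc', sinSqKernel]
    exact div_le_div_of_nonneg_left (by positivity) hpos hle
  have hvol : volume (Ico a b ×ˢ Ico a b) ≠ ⊤ := by
    rw [Measure.volume_eq_prod, Measure.prod_prod, Real.volume_Ico]
    exact ENNReal.mul_ne_top ENNReal.ofReal_ne_top ENNReal.ofReal_ne_top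
  calc (∫ x in Ico a b, sin x ^ 2) ^ 2 / (2 * b ^ 2)
      = ∫ p in Ico a b ×ˢ Ico a b, sin p.1 ^ 2 * (sin p.2 ^ 2 / (2 * b ^ 2)) := by
        rw [Measure.volume_eq_prod, setIntegral_prod_mul (fun x => sin x ^ 2)
          (fun y => sin y ^ 2 / (2 * b ^ 2)), integral_div]
        ring
    _ ≤ ∫ p in Ico a b ×ˢ Ico a b, sinSqKernel p :=
        integral_mono_of_nonneg (ae_of_all _ fun p => by positivity)
          (integrableOn_sinSqKernel hvol)
          (ae_restrict_of_forall_mem (measurableSet_Ico.prod measurableSet_Ico) hpointwise)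

/-- Chosen so that `sin (2 c)` vanishes at every right endpoint `c = dyadicScale (k + 1)` and is
nonnegative at every left endpoint, which makes the boundary terms of `∫ sin²` favourable. -/
noncomputable def dyadicScale (k : ℕ) : ℝ := π * 2 ^ k / 4

lemma dyadicScale_succ (k : ℕ) : dyadicScale (k + 1) = 2 * dyadicScale k := by
  simp only [dyadicScale, pow_succ]
  ring

lemma dyadicScale_pos (k : ℕ) : 0 < dyadicScale k := by
  unfold dyadicScale
  positivity

lemma monotone_dyadicScale : Monotone dyadicScale :=
  monotone_nat_of_le_succ fun k => by
    rw [dyadicScale_succ]; linarith [dyadicScale_pos k]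

lemma dyadicScale_succ_le_two_pow (k : ℕ) : dyadicScale (k + 1) ≤ 2 ^ (k + 1) := by
  have : (0 : ℝ) < 2 ^ (k + 1) := by positivity
  unfold dyadicScale
  nlinarith [pi_le_four]

lemma sin_two_mul_dyadicScale_succ (k : ℕ) : sin (2 * dyadicScale (k + 1)) = 0 := by
  rw [show 2 * dyadicScale (k + 1) = (2 ^ k : ℕ) * π by
    rw [dyadicScale_succ, dyadicScale]; push_cast; ring]
  exact sin_nat_mul_pi _

lemma sin_mul_cos_dyadicScale_succ_le (k : ℕ) :
    sin (dyadicScale (k + 1)) * cos (dyadicScale (k + 1)) ≤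
      sin (dyadicScale k) * cos (dyadicScale k) := by
  have hnonneg : 0 ≤ sin (2 * dyadicScale k) := by
    cases k with
    | zero => simp [dyadicScale, show 2 * (π / 4) = π / 2 by ring]
    | succ j => exact (sin_two_mul_dyadicScale_succ j).ge
  have hdouble (x : ℝ) : sin x * cos x = sin (2 * x) / 2 := by rw [sin_two_mul]; ring
  rw [hdouble, hdouble, sin_two_mul_dyadicScale_succ]
  linarith

lemma one_div_thirtyTwo_le_integral_sinSqKernel_dyadic (k : ℕ) :
    1 / 32 ≤ ∫ p in Ico (dyadicScale k) (dyadicScale (k + 1)) ×ˢ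
      Ico (dyadicScale k) (dyadicScale (k + 1)), sinSqKernel p := by
  have hsin := half_sub_le_integral_sin_sq (monotone_dyadicScale k.le_succ)
    (sin_mul_cos_dyadicScale_succ_le k)
  have hc := dyadicScale_pos k
  rw [dyadicScale_succ] at hsin ⊢
  refine le_trans ?_ (integral_sin_sq_sq_div_le_integral_sinSqKernel hc)
  rw [le_div_iff₀ (by positivity)]
  nlinarith

lemma Ico_dyadicScale_subset_Icc {k N : ℕ} (hk : k < N) :
    Ico (dyadicScale k) (dyadicScale (k + 1)) ⊆ Icc (-(2 : ℝ) ^ N) (2 ^ N) := by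
  have hlow : -(2 : ℝ) ^ N ≤ dyadicScale k := by
    linarith [dyadicScale_pos k, pow_pos (two_pos (α := ℝ)) N]
  have hupp : dyadicScale (k + 1) ≤ 2 ^ N :=
    (dyadicScale_succ_le_two_pow k).trans (pow_le_pow_right₀ (by norm_num) hk)
  exact Ico_subset_Icc_self.trans (Icc_subset_Icc hlow hupp)

theorem stmt_8 : ∃ c : ℝ, 0 < c ∧
    ∀ N : ℕ, 1 ≤ N →
      c * (N : ℝ) ≤
        ∫ p in (Set.Icc (-(2 : ℝ) ^ N) ((2 : ℝ) ^ N)) ×ˢ (Set.Icc (-(2 : ℝ) ^ N) ((2 : ℝ) ^ N)),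
          (Real.sin p.1) ^ 2 * (Real.sin p.2) ^ 2 / (p.1 ^ 2 + p.2 ^ 2) := by
  refine ⟨1 / 32, by norm_num, fun N _ => ?_⟩
  set I : ℕ → Set ℝ := fun k => Ico (dyadicScale k) (dyadicScale (k + 1))
  set S := Icc (-(2 : ℝ) ^ N) (2 ^ N) ×ˢ Icc (-(2 : ℝ) ^ N) (2 ^ N)
  have hS : IntegrableOn sinSqKernel S := integrableOn_sinSqKernel <| by
    rw [Measure.volume_eq_prod, Measure.prod_prod, Real.volume_Icc]
    exact ENNReal.mul_ne_top ENNReal.ofReal_ne_top ENNReal.ofReal_ne_top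
  have hsub : ∀ k ∈ Finset.range N, I k ×ˢ I k ⊆ S := fun k hk =>
    prod_mono (Ico_dyadicScale_subset_Icc (Finset.mem_range.1 hk))
      (Ico_dyadicScale_subset_Icc (Finset.mem_range.1 hk))
  calc 1 / 32 * (N : ℝ) = ∑ k ∈ Finset.range N, (1 / 32 : ℝ) := by simp [mul_comm]
    _ ≤ ∑ k ∈ Finset.range N, ∫ p in I k ×ˢ I k, sinSqKernel p :=
        Finset.sum_le_sum fun k _ => one_div_thirtyTwo_le_integral_sinSqKernel_dyadic k
    _ = ∫ p in ⋃ k ∈ Finset.range N, I k ×ˢ I k, sinSqKernel p :=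
        (integral_biUnion_finset _ (fun _ _ => measurableSet_Ico.prod measurableSet_Ico)
          (fun i _ j _ hij => disjoint_prod.2 <| .inl <|
            monotone_dyadicScale.pairwise_disjoint_on_Ico_succ hij)
          fun k hk => hS.mono_set (hsub k hk)).symm
    _ ≤ ∫ p in S, sinSqKernel p :=
        setIntegral_mono_set hS (ae_of_all _ sinSqKernel_nonneg)
          (iUnion₂_subset hsub).eventuallyLE
end

section
/- Let Q : ℝ² → ℝ be the harmonic polynomial Q(x,y) = x⁴ + y⁴ − 6x²y², and let G(x,y) = Q(x,y)·log(x² + y²) for (x,y) ≠ (0,0). Then there exists a constant C > 0 such that for all (x,y) with 0 < x² + y² < 1, |∂⁴G/∂x²∂y²(x,y) + 24·log(x² + y²)| ≤ C; that is, the mixed fourth partial derivative ∂_{xxyy}G equals −24·log(x² + y²) plus a function bounded on the punctured unit ball. -/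
/-!
Differentiating `G = Q · log r`, `r = x² + y²`, four times gives `-24 · log r` plus a rational
function that is homogeneous of degree `0`: explicitly `∂⁴G/∂x²∂y² = -24 log r - 68 + 768 x⁴y⁴/r⁴`.
Since `4x²y² ≤ r²`, the rational part lies in `[-68, -20]`.
-/

/-- Partial derivative in the first (x) variable. -/
noncomputable def pdx (f : ℝ → ℝ → ℝ) : ℝ → ℝ → ℝ := fun x y => deriv (fun x' => f x' y) x

/-- Partial derivative in the second (y) variable. -/
noncomputable def pdy (f : ℝ → ℝ → ℝ) : ℝ → ℝ → ℝ := fun x y => deriv (fun y' => f x y') y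

/-- The harmonic polynomial `Q(x,y) = x⁴ + y⁴ − 6x²y²`. -/
noncomputable def Q : ℝ → ℝ → ℝ := fun x y => x ^ 4 + y ^ 4 - 6 * x ^ 2 * y ^ 2

/-- `G(x,y) = Q(x,y) · log(x² + y²)`. -/
noncomputable def G : ℝ → ℝ → ℝ := fun x y => Q x y * Real.log (x ^ 2 + y ^ 2)

open Filter Topology Real

section PartialDerivatives

variable {U : Set (ℝ × ℝ)} {f g g' : ℝ → ℝ → ℝ}

theorem pdx_eq_of_hasDerivAt (hU : IsOpen U) (hfg : ∀ x y, (x, y) ∈ U → f x y = g x y)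
    (hg : ∀ x y, (x, y) ∈ U → HasDerivAt (fun x' => g x' y) (g' x y) x) :
    ∀ x y, (x, y) ∈ U → pdx f x y = g' x y := by
  intro x y hxy
  have hnear : ∀ᶠ x' in 𝓝 x, (x', y) ∈ U :=
    (continuous_id.prodMk continuous_const).continuousAt.preimage_mem_nhds (hU.mem_nhds hxy)
  have hfg_near : (fun x' => f x' y) =ᶠ[𝓝 x] fun x' => g x' y := by
    filter_upwards [hnear] with x' hx' using hfg x' y hx'
  exact ((hg x y hxy).congr_of_eventuallyEq hfg_near).deriv

theorem pdy_eq_of_hasDerivAt (hU : IsOpen U) (hfg : ∀ x y, (x, y) ∈ U → f x y = g x y)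
    (hg : ∀ x y, (x, y) ∈ U → HasDerivAt (fun y' => g x y') (g' x y) y) :
    ∀ x y, (x, y) ∈ U → pdy f x y = g' x y := by
  intro x y hxy
  have hnear : ∀ᶠ y' in 𝓝 y, (x, y') ∈ U :=
    (continuous_const.prodMk continuous_id).continuousAt.preimage_mem_nhds (hU.mem_nhds hxy)
  have hfg_near : (fun y' => f x y') =ᶠ[𝓝 y] fun y' => g x y' := by
    filter_upwards [hnear] with y' hy' using hfg x y' hy'
  exact ((hg x y hxy).congr_of_eventuallyEq hfg_near).deriv

end PartialDerivatives

def puncturedPlane : Set (ℝ × ℝ) := {p | 0 < p.1 ^ 2 + p.2 ^ 2}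

theorem isOpen_puncturedPlane : IsOpen puncturedPlane :=
  isOpen_lt continuous_const (by fun_prop)

noncomputable def Gy : ℝ → ℝ → ℝ := fun x y =>
  (4 * y ^ 3 - 12 * x ^ 2 * y) * log (x ^ 2 + y ^ 2) +
    (2 * x ^ 4 * y - 12 * x ^ 2 * y ^ 3 + 2 * y ^ 5) / (x ^ 2 + y ^ 2)

noncomputable def Gyy : ℝ → ℝ → ℝ := fun x y =>
  (12 * y ^ 2 - 12 * x ^ 2) * log (x ^ 2 + y ^ 2) +
    (2 * x ^ 6 - 62 * x ^ 4 * y ^ 2 - 18 * x ^ 2 * y ^ 4 + 14 * y ^ 6) / (x ^ 2 + y ^ 2) ^ 2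

noncomputable def Gxyy : ℝ → ℝ → ℝ := fun x y =>
  -24 * x * log (x ^ 2 + y ^ 2) +
    (-20 * x ^ 7 - 12 * x ^ 5 * y ^ 2 - 188 * x ^ 3 * y ^ 4 - 68 * x * y ^ 6) / (x ^ 2 + y ^ 2) ^ 3

noncomputable def Gxxyy : ℝ → ℝ → ℝ := fun x y =>
  -24 * log (x ^ 2 + y ^ 2) - 68 + 768 * x ^ 4 * y ^ 4 / (x ^ 2 + y ^ 2) ^ 4

section Derivatives

variable (x y : ℝ)

theorem hasDerivAt_sq_add_sq_left : HasDerivAt (fun x' => x' ^ 2 + y ^ 2) (2 * x) x := by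
  simpa using (hasDerivAt_pow 2 x).add_const (y ^ 2)

theorem hasDerivAt_sq_add_sq_right : HasDerivAt (fun y' => x ^ 2 + y' ^ 2) (2 * y) y := by
  simpa using (hasDerivAt_pow 2 y).const_add (x ^ 2)

variable {x y}

theorem hasDerivAt_G_right (hr : 0 < x ^ 2 + y ^ 2) :
    HasDerivAt (fun y' => G x y') (Gy x y) y := by
  have hQ : HasDerivAt (fun y' => Q x y') (4 * y ^ 3 - 12 * x ^ 2 * y) y := by
    have := ((hasDerivAt_pow 4 y).const_add (x ^ 4)).sub
      ((hasDerivAt_pow 2 y).const_mul (6 * x ^ 2))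
    exact this.congr_deriv (by push_cast; ring)
  have hr' := hasDerivAt_sq_add_sq_right x y
  refine (hQ.mul (hr'.log hr.ne')).congr_deriv ?_
  simp only [Gy, Q]
  field_simp
  ring

theorem hasDerivAt_Gy_right (hr : 0 < x ^ 2 + y ^ 2) :
    HasDerivAt (fun y' => Gy x y') (Gyy x y) y := by
  have hP : HasDerivAt (fun y' => 4 * y' ^ 3 - 12 * x ^ 2 * y') (12 * y ^ 2 - 12 * x ^ 2) y := by
    have := ((hasDerivAt_pow 3 y).const_mul 4).sub ((hasDerivAt_id y).const_mul (12 * x ^ 2))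
    exact this.congr_deriv (by push_cast; ring)
  have hN : HasDerivAt (fun y' => 2 * x ^ 4 * y' - 12 * x ^ 2 * y' ^ 3 + 2 * y' ^ 5)
      (2 * x ^ 4 - 36 * x ^ 2 * y ^ 2 + 10 * y ^ 4) y := by
    have := (((hasDerivAt_id y).const_mul (2 * x ^ 4)).sub
      ((hasDerivAt_pow 3 y).const_mul (12 * x ^ 2))).add ((hasDerivAt_pow 5 y).const_mul 2)
    exact this.congr_deriv (by push_cast; ring)
  have hr' := hasDerivAt_sq_add_sq_right x y
  refine ((hP.mul (hr'.log hr.ne')).add (hN.div hr' hr.ne')).congr_deriv ?_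
  simp only [Gyy]
  field_simp
  ring

theorem hasDerivAt_Gyy_left (hr : 0 < x ^ 2 + y ^ 2) :
    HasDerivAt (fun x' => Gyy x' y) (Gxyy x y) x := by
  have hP : HasDerivAt (fun x' => 12 * y ^ 2 - 12 * x' ^ 2) (-24 * x) x := by
    have := (hasDerivAt_const x (12 * y ^ 2)).sub ((hasDerivAt_pow 2 x).const_mul 12)
    exact this.congr_deriv (by push_cast; ring)
  have hN : HasDerivAt
      (fun x' => 2 * x' ^ 6 - 62 * x' ^ 4 * y ^ 2 - 18 * x' ^ 2 * y ^ 4 + 14 * y ^ 6)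
      (12 * x ^ 5 - 248 * x ^ 3 * y ^ 2 - 36 * x * y ^ 4) x := by
    have := ((((hasDerivAt_pow 6 x).const_mul 2).sub
      (((hasDerivAt_pow 4 x).const_mul 62).mul_const (y ^ 2))).sub
      (((hasDerivAt_pow 2 x).const_mul 18).mul_const (y ^ 4))).add_const (14 * y ^ 6)
    exact this.congr_deriv (by push_cast; ring)
  have hr' := hasDerivAt_sq_add_sq_left x y
  refine ((hP.mul (hr'.log hr.ne')).add
    (hN.div (hr'.pow 2) (pow_ne_zero 2 hr.ne'))).congr_deriv ?_
  simp only [Gxyy, Pi.pow_apply]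
  field_simp
  ring

theorem hasDerivAt_Gxyy_left (hr : 0 < x ^ 2 + y ^ 2) :
    HasDerivAt (fun x' => Gxyy x' y) (Gxxyy x y) x := by
  have hP : HasDerivAt (fun x' => -24 * x') (-24) x := by
    simpa using (hasDerivAt_id x).const_mul (-24 : ℝ)
  have hN : HasDerivAt
      (fun x' => -20 * x' ^ 7 - 12 * x' ^ 5 * y ^ 2 - 188 * x' ^ 3 * y ^ 4 - 68 * x' * y ^ 6)
      (-140 * x ^ 6 - 60 * x ^ 4 * y ^ 2 - 564 * x ^ 2 * y ^ 4 - 68 * y ^ 6) x := by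
    have := ((((hasDerivAt_pow 7 x).const_mul (-20)).sub
      (((hasDerivAt_pow 5 x).const_mul 12).mul_const (y ^ 2))).sub
      (((hasDerivAt_pow 3 x).const_mul 188).mul_const (y ^ 4))).sub
      (((hasDerivAt_id x).const_mul 68).mul_const (y ^ 6))
    exact this.congr_deriv (by push_cast; ring)
  have hr' := hasDerivAt_sq_add_sq_left x y
  refine ((hP.mul (hr'.log hr.ne')).add
    (hN.div (hr'.pow 3) (pow_ne_zero 3 hr.ne'))).congr_deriv ?_
  simp only [Gxxyy, Pi.pow_apply]
  field_simp
  ring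

end Derivatives

theorem pdx_pdx_pdy_pdy_G {x y : ℝ} (hr : 0 < x ^ 2 + y ^ 2) :
    pdx (pdx (pdy (pdy G))) x y = Gxxyy x y := by
  have hU := isOpen_puncturedPlane
  have h1 := pdy_eq_of_hasDerivAt hU (fun _ _ _ => rfl) fun _ _ => hasDerivAt_G_right
  have h2 := pdy_eq_of_hasDerivAt hU h1 fun _ _ => hasDerivAt_Gy_right
  have h3 := pdx_eq_of_hasDerivAt hU h2 fun _ _ => hasDerivAt_Gyy_left
  exact pdx_eq_of_hasDerivAt hU h3 (fun _ _ => hasDerivAt_Gxyy_left) x y hr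

theorem pow_four_mul_pow_four_div_le (x y : ℝ) :
    x ^ 4 * y ^ 4 / (x ^ 2 + y ^ 2) ^ 4 ≤ 1 / 16 := by
  have amgm : 4 * (x ^ 2 * y ^ 2) ≤ (x ^ 2 + y ^ 2) ^ 2 := by nlinarith [sq_nonneg (x ^ 2 - y ^ 2)]
  refine div_le_of_le_mul₀ (by positivity) (by norm_num) ?_
  nlinarith [mul_le_mul amgm amgm (by positivity) (by positivity)]

theorem stmt_10 : ∃ C : ℝ, 0 < C ∧
    ∀ x y : ℝ, 0 < x ^ 2 + y ^ 2 → x ^ 2 + y ^ 2 < 1 →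
      |pdx (pdx (pdy (pdy G))) x y + 24 * Real.log (x ^ 2 + y ^ 2)| ≤ C := by
  refine ⟨68, by norm_num, fun x y hr _ => ?_⟩
  have hle := pow_four_mul_pow_four_div_le x y
  have hnonneg : 0 ≤ x ^ 4 * y ^ 4 / (x ^ 2 + y ^ 2) ^ 4 := by positivity
  rw [pdx_pdx_pdy_pdy_G hr, Gxxyy, mul_assoc 768, mul_div_assoc, abs_le]
  constructor <;> linarith
end

section
/- Let Q : ℝ² → ℝ be the harmonic polynomial Q(x,y) = x⁴ + y⁴ − 6x²y², and let G(x,y) = Q(x,y)·log(x² + y²) for (x,y) ≠ (0,0). Then there exists a constant C > 0 such that for all (x,y) with 0 < x² + y² < 1 and all choices i, j ∈ {x, y}, the second partial derivatives of the Laplacian satisfy |∂_i∂_j(ΔG)(x,y)| ≤ C; that is, all second partial derivatives of ΔG are bounded on the punctured unit ball. -/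
/-- The Laplacian of `G`. -/
noncomputable def lapG : ℝ → ℝ → ℝ := fun x y => pdx (pdx G) x y + pdy (pdy G) x y

/-!
Since `Q` and `log (x² + y²)` are both harmonic,
`ΔG = 2 ∇Q · ∇log (x² + y²) = 4 (x Q_x + y Q_y) / (x² + y²)`, which is `16 Q / (x² + y²)` by
Euler's identity for the quartic `Q`. This function is homogeneous of degree `2`, so its second
partial derivatives are sextic forms divided by `(x² + y²)³`, hence bounded away from the origin.
As `Q` and `G` are symmetric in `x` and `y`, only `∂ₓ∂ₓ` and `∂ᵧ∂ₓ` of `ΔG` need to be computed.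
-/

open Real

section Symmetric

variable {f : ℝ → ℝ → ℝ}

lemma pdy_eq_pdx_of_symm (hf : ∀ x y, f x y = f y x) (x y : ℝ) : pdy f x y = pdx f y x := by
  simp only [pdy, pdx, hf x]

lemma pdy_pdy_eq_pdx_pdx_of_symm (hf : ∀ x y, f x y = f y x) (x y : ℝ) :
    pdy (pdy f) x y = pdx (pdx f) y x :=
  congrArg (deriv · y) (funext (pdy_eq_pdx_of_symm hf x))

lemma pdx_pdy_eq_pdy_pdx_of_symm (hf : ∀ x y, f x y = f y x) (x y : ℝ) :
    pdx (pdy f) x y = pdy (pdx f) y x :=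
  congrArg (deriv · x) (funext fun x' => pdy_eq_pdx_of_symm hf x' y)

end Symmetric

lemma G_symm (x y : ℝ) : G x y = G y x := by
  simp only [G, Q, add_comm (x ^ 2)]
  ring

lemma lapG_symm (x y : ℝ) : lapG x y = lapG y x := by
  simp only [lapG, pdy_pdy_eq_pdx_pdx_of_symm G_symm]
  ring

noncomputable def dxG (x y : ℝ) : ℝ :=
  (4 * x ^ 3 - 12 * x * y ^ 2) * log (x ^ 2 + y ^ 2) + 2 * x * Q x y / (x ^ 2 + y ^ 2)

noncomputable def dxxG (x y : ℝ) : ℝ :=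
  (12 * x ^ 2 - 12 * y ^ 2) * log (x ^ 2 + y ^ 2) +
    (14 * x ^ 6 - 18 * x ^ 4 * y ^ 2 - 62 * x ^ 2 * y ^ 4 + 2 * y ^ 6) / (x ^ 2 + y ^ 2) ^ 2

noncomputable def L (x y : ℝ) : ℝ := 16 * Q x y / (x ^ 2 + y ^ 2)

noncomputable def dxL (x y : ℝ) : ℝ :=
  (32 * x ^ 5 + 64 * x ^ 3 * y ^ 2 - 224 * x * y ^ 4) / (x ^ 2 + y ^ 2) ^ 2

noncomputable def dxxL (x y : ℝ) : ℝ :=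
  (32 * x ^ 6 + 96 * x ^ 4 * y ^ 2 + 864 * x ^ 2 * y ^ 4 - 224 * y ^ 6) / (x ^ 2 + y ^ 2) ^ 3

noncomputable def dxyL (x y : ℝ) : ℝ := -1024 * x ^ 3 * y ^ 3 / (x ^ 2 + y ^ 2) ^ 3

section Derivatives

variable {x y : ℝ}

lemma hasDerivAt_sq_add_sq_fst (x y : ℝ) : HasDerivAt (fun t => t ^ 2 + y ^ 2) (2 * x) x := by
  simpa using (hasDerivAt_pow 2 x).add_const (y ^ 2)

lemma hasDerivAt_log_sq_add_sq_fst (h : x ^ 2 + y ^ 2 ≠ 0) :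
    HasDerivAt (fun t => log (t ^ 2 + y ^ 2)) (2 * x / (x ^ 2 + y ^ 2)) x := by
  simpa [div_eq_inv_mul] using (hasDerivAt_sq_add_sq_fst x y).log h

lemma hasDerivAt_Q_fst (x y : ℝ) :
    HasDerivAt (fun t => Q t y) (4 * x ^ 3 - 12 * x * y ^ 2) x := by
  refine (((hasDerivAt_pow 4 x).add_const (y ^ 4)).sub
    (((hasDerivAt_pow 2 x).const_mul 6).mul_const (y ^ 2))).congr_deriv ?_
  push_cast
  ring

lemma hasDerivAt_G_fst (h : x ^ 2 + y ^ 2 ≠ 0) : HasDerivAt (fun t => G t y) (dxG x y) x := by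
  refine ((hasDerivAt_Q_fst x y).mul (hasDerivAt_log_sq_add_sq_fst h)).congr_deriv ?_
  simp only [dxG]
  ring

lemma hasDerivAt_dxG_fst (h : x ^ 2 + y ^ 2 ≠ 0) :
    HasDerivAt (fun t => dxG t y) (dxxG x y) x := by
  have hdQ : HasDerivAt (fun t => 4 * t ^ 3 - 12 * t * y ^ 2) (12 * x ^ 2 - 12 * y ^ 2) x := by
    refine (((hasDerivAt_pow 3 x).const_mul 4).sub
      (((hasDerivAt_id' x).const_mul 12).mul_const (y ^ 2))).congr_deriv ?_
    push_cast
    ring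
  have h2xQ : HasDerivAt (fun t => 2 * t * Q t y)
      (2 * Q x y + 2 * x * (4 * x ^ 3 - 12 * x * y ^ 2)) x := by
    refine (((hasDerivAt_id' x).const_mul 2).mul (hasDerivAt_Q_fst x y)).congr_deriv ?_
    ring
  refine ((hdQ.mul (hasDerivAt_log_sq_add_sq_fst h)).add
    (h2xQ.div (hasDerivAt_sq_add_sq_fst x y) h)).congr_deriv ?_
  simp only [dxxG, Q]
  field_simp
  ring

lemma hasDerivAt_L_fst (h : x ^ 2 + y ^ 2 ≠ 0) : HasDerivAt (fun t => L t y) (dxL x y) x := by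
  refine (((hasDerivAt_Q_fst x y).const_mul 16).div
    (hasDerivAt_sq_add_sq_fst x y) h).congr_deriv ?_
  simp only [dxL, Q]
  field_simp
  ring

lemma hasDerivAt_dxL_fst (h : x ^ 2 + y ^ 2 ≠ 0) :
    HasDerivAt (fun t => dxL t y) (dxxL x y) x := by
  have hnum : HasDerivAt (fun t => 32 * t ^ 5 + 64 * t ^ 3 * y ^ 2 - 224 * t * y ^ 4)
      (160 * x ^ 4 + 192 * x ^ 2 * y ^ 2 - 224 * y ^ 4) x := by
    refine ((((hasDerivAt_pow 5 x).const_mul 32).add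
      (((hasDerivAt_pow 3 x).const_mul 64).mul_const (y ^ 2))).sub
      (((hasDerivAt_id' x).const_mul 224).mul_const (y ^ 4))).congr_deriv ?_
    push_cast
    ring
  have hden : HasDerivAt (fun t => (t ^ 2 + y ^ 2) ^ 2) (2 * (x ^ 2 + y ^ 2) * (2 * x)) x := by
    refine ((hasDerivAt_sq_add_sq_fst x y).pow 2).congr_deriv ?_
    push_cast
    ring
  refine (hnum.div hden (pow_ne_zero 2 h)).congr_deriv ?_
  simp only [dxxL]
  field_simp
  ring

lemma hasDerivAt_dxL_snd (h : x ^ 2 + y ^ 2 ≠ 0) :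
    HasDerivAt (fun t => dxL x t) (dxyL x y) y := by
  have hnum : HasDerivAt (fun t => 32 * x ^ 5 + 64 * x ^ 3 * t ^ 2 - 224 * x * t ^ 4)
      (128 * x ^ 3 * y - 896 * x * y ^ 3) y := by
    refine ((((hasDerivAt_pow 2 y).const_mul (64 * x ^ 3)).const_add (32 * x ^ 5)).sub
      ((hasDerivAt_pow 4 y).const_mul (224 * x))).congr_deriv ?_
    push_cast
    ring
  have hden : HasDerivAt (fun t => (x ^ 2 + t ^ 2) ^ 2) (2 * (x ^ 2 + y ^ 2) * (2 * y)) y := by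
    refine (((hasDerivAt_pow 2 y).const_add (x ^ 2)).pow 2).congr_deriv ?_
    push_cast
    ring
  refine (hnum.div hden (pow_ne_zero 2 h)).congr_deriv ?_
  simp only [dxyL]
  field_simp
  ring

end Derivatives

section Congr

variable {f g : ℝ → ℝ → ℝ} {x y a : ℝ}

lemma pdx_eq_of_eq_off_origin (hfg : ∀ x y, x ^ 2 + y ^ 2 ≠ 0 → f x y = g x y)
    (h : x ^ 2 + y ^ 2 ≠ 0) (hg : HasDerivAt (fun t => g t y) a x) : pdx f x y = a := by
  have hnear : ∀ᶠ t in nhds x, t ^ 2 + y ^ 2 ≠ 0 :=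
    (continuous_id.pow 2 |>.add continuous_const).continuousAt.eventually_ne h
  exact (hg.congr_of_eventuallyEq (hnear.mono fun t ht => hfg t y ht)).deriv

lemma pdy_eq_of_eq_off_origin (hfg : ∀ x y, x ^ 2 + y ^ 2 ≠ 0 → f x y = g x y)
    (h : x ^ 2 + y ^ 2 ≠ 0) (hg : HasDerivAt (fun t => g x t) a y) : pdy f x y = a := by
  have hnear : ∀ᶠ t in nhds y, x ^ 2 + t ^ 2 ≠ 0 :=
    (continuous_const.add (continuous_id.pow 2)).continuousAt.eventually_ne h
  exact (hg.congr_of_eventuallyEq (hnear.mono fun t ht => hfg x t ht)).deriv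

end Congr

section Laplacian

variable {x y : ℝ}

lemma pdx_G (h : x ^ 2 + y ^ 2 ≠ 0) : pdx G x y = dxG x y := (hasDerivAt_G_fst h).deriv

lemma pdx_pdx_G (h : x ^ 2 + y ^ 2 ≠ 0) : pdx (pdx G) x y = dxxG x y :=
  pdx_eq_of_eq_off_origin (fun _ _ => pdx_G) h (hasDerivAt_dxG_fst h)

lemma lapG_eq_L (h : x ^ 2 + y ^ 2 ≠ 0) : lapG x y = L x y := by
  have h' : y ^ 2 + x ^ 2 ≠ 0 := by rwa [add_comm]
  rw [lapG, pdy_pdy_eq_pdx_pdx_of_symm G_symm, pdx_pdx_G h, pdx_pdx_G h']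
  simp only [dxxG, L, Q, add_comm (y ^ 2)]
  field_simp
  ring

lemma pdx_lapG (h : x ^ 2 + y ^ 2 ≠ 0) : pdx lapG x y = dxL x y :=
  pdx_eq_of_eq_off_origin (fun _ _ => lapG_eq_L) h (hasDerivAt_L_fst h)

lemma pdx_pdx_lapG (h : x ^ 2 + y ^ 2 ≠ 0) : pdx (pdx lapG) x y = dxxL x y :=
  pdx_eq_of_eq_off_origin (fun _ _ => pdx_lapG) h (hasDerivAt_dxL_fst h)

lemma pdy_pdx_lapG (h : x ^ 2 + y ^ 2 ≠ 0) : pdy (pdx lapG) x y = dxyL x y :=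
  pdy_eq_of_eq_off_origin (fun _ _ => pdx_lapG) h (hasDerivAt_dxL_snd h)

end Laplacian

lemma abs_div_cube_le_of_abs_le {p r C : ℝ} (hr : 0 < r) (hp : |p| ≤ C * r ^ 3) :
    |p / r ^ 3| ≤ C := by
  rwa [abs_div, abs_of_pos (pow_pos hr 3), div_le_iff₀ (pow_pos hr 3)]

lemma abs_dxxL_le {x y : ℝ} (h : 0 < x ^ 2 + y ^ 2) : |dxxL x y| ≤ 1216 := by
  refine abs_div_cube_le_of_abs_le h (abs_le.mpr ⟨?_, ?_⟩) <;>
    nlinarith [sq_nonneg (x ^ 3), sq_nonneg (y ^ 3), sq_nonneg (x ^ 2 * y), sq_nonneg (x * y ^ 2)]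

lemma abs_dxyL_le {x y : ℝ} (h : 0 < x ^ 2 + y ^ 2) : |dxyL x y| ≤ 1216 := by
  refine abs_div_cube_le_of_abs_le h (abs_le.mpr ⟨?_, ?_⟩) <;>
    nlinarith [sq_nonneg (x ^ 3), sq_nonneg (y ^ 3), sq_nonneg (x ^ 2 * y - x * y ^ 2),
      sq_nonneg (x ^ 2 * y + x * y ^ 2)]

theorem stmt_11 : ∃ C : ℝ, 0 < C ∧
    ∀ x y : ℝ, 0 < x ^ 2 + y ^ 2 → x ^ 2 + y ^ 2 < 1 →
      |pdx (pdx lapG) x y| ≤ C ∧ |pdx (pdy lapG) x y| ≤ C ∧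
      |pdy (pdx lapG) x y| ≤ C ∧ |pdy (pdy lapG) x y| ≤ C := by
  have hxx : ∀ x y : ℝ, 0 < x ^ 2 + y ^ 2 → |pdx (pdx lapG) x y| ≤ 1216 := fun x y h => by
    rw [pdx_pdx_lapG h.ne']
    exact abs_dxxL_le h
  have hyx : ∀ x y : ℝ, 0 < x ^ 2 + y ^ 2 → |pdy (pdx lapG) x y| ≤ 1216 := fun x y h => by
    rw [pdy_pdx_lapG h.ne']
    exact abs_dxyL_le h
  refine ⟨1216, by norm_num, fun x y h _ => ?_⟩
  have h' : 0 < y ^ 2 + x ^ 2 := by linarith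
  rw [pdx_pdy_eq_pdy_pdx_of_symm lapG_symm, pdy_pdy_eq_pdx_pdx_of_symm lapG_symm]
  exact ⟨hxx x y h, hyx y x h', hyx x y h, hxx y x h'⟩
end
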